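/- For any set S of n points in general position in the plane and every integer m with 3 ≤ m ≤ n, Σ_{k=3}^{m} Σ_{ℓ=m−k}^{n−k} binom(ℓ, m−k) · X_{k,ℓ}(S) = binom(n, m). -/

import Mathlib

open Finset
open scoped Classical

def GenPos (S : Finset (ℝ × ℝ)) : Prop :=
  ∀ T ⊆ S, T.card = 3 → ¬ Collinear ℝ (T : Set (ℝ × ℝ))

def ConvexPos (T : Finset (ℝ × ℝ)) : Prop :=
  ∀ p ∈ T, p ∉ convexHull ℝ ((T : Set (ℝ × ℝ)) \ {p})

/-- number of convex k-gons with vertices in S and exactly l points of S inside -/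
noncomputable def X (S : Finset (ℝ × ℝ)) (k l : ℕ) : ℕ :=
  ((Finset.powersetCard k S).filter (fun T => ConvexPos T ∧
    (S.filter (fun p => p ∈ interior (convexHull ℝ (T : Set (ℝ × ℝ))))).card = l)).card

/-- number of extreme points (convex hull vertices) of S -/
noncomputable def hullVerts (S : Finset (ℝ × ℝ)) : ℕ :=
  (S.filter (fun p => p ∉ convexHull ℝ ((S : Set (ℝ × ℝ)) \ {p}))).card

/-!
Every `m`-subset `M` of `S` is sorted by the vertex set `T` of its convex hull. By general
position `T` is a convex polygon with `3 ≤ |T| ≤ m`, and every other point of `M` lies in the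
interior of `conv T`: a point of `S` on the boundary of `conv T` that is not a vertex would be
collinear with two vertices. Conversely, `T` together with any `m - |T|` points of `S` inside
`conv T` has vertex set `T`. Hence `binom(n, m) = Σ_T binom(ℓ(T), m - |T|)`, and grouping the
polygons `T` by their size `k` and number `ℓ` of interior points gives the left-hand side.
-/
section Extreme

variable {E : Type*} [NormedAddCommGroup E] [NormedSpace ℝ E]

theorem Set.Finite.convexHull_extremePoints {s : Set E} (hs : s.Finite) :
    convexHull ℝ ((convexHull ℝ s).extremePoints ℝ) = convexHull ℝ s := by
  have hfin : ((convexHull ℝ s).extremePoints ℝ).Finite := hs.subset extremePoints_convexHull_subset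
  conv_rhs => rw [← closure_convexHull_extremePoints (hs.isCompact_convexHull ℝ)
    (convex_convexHull ℝ s)]
  exact (hfin.isClosed_convexHull ℝ).closure_eq.symm

theorem Set.Finite.mem_extremePoints_convexHull_iff {s : Set E} (hs : s.Finite) {x : E}
    (hx : x ∈ s) : x ∈ (convexHull ℝ s).extremePoints ℝ ↔ x ∉ convexHull ℝ (s \ {x}) := by
  refine ⟨fun hext hmem => ?_, fun hnot => ?_⟩
  · have := extremePoints_convexHull_subset
      (inter_extremePoints_subset_extremePoints_of_subset
        (convexHull_mono Set.sdiff_subset) ⟨hmem, hext⟩)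
    exact this.2 rfl
  · by_contra hext
    refine hnot (convexHull_mono ?_ (hs.convexHull_extremePoints.symm ▸ subset_convexHull ℝ s hx))
    exact fun y hy => ⟨extremePoints_convexHull_subset hy, fun hyx => hext (hyx ▸ hy)⟩

end Extreme

section Vertices

variable {E : Type*} [NormedAddCommGroup E] [NormedSpace ℝ E]

noncomputable def vertices (M : Finset E) : Finset E :=
  M.filter (· ∈ (convexHull ℝ (M : Set E)).extremePoints ℝ)

theorem coe_vertices (M : Finset E) :
    (vertices M : Set E) = (convexHull ℝ (M : Set E)).extremePoints ℝ := by
  ext x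
  simpa [vertices] using fun hx => mem_coe.1 (extremePoints_convexHull_subset hx)

theorem vertices_subset (M : Finset E) : vertices M ⊆ M := filter_subset _ _

theorem convexHull_vertices (M : Finset E) :
    convexHull ℝ (vertices M : Set E) = convexHull ℝ (M : Set E) := by
  rw [coe_vertices, M.finite_toSet.convexHull_extremePoints]

end Vertices

theorem convexPos_iff_coe_eq_extremePoints {T : Finset (ℝ × ℝ)} :
    ConvexPos T ↔ (T : Set (ℝ × ℝ)) = (convexHull ℝ (T : Set (ℝ × ℝ))).extremePoints ℝ := by
  refine ⟨fun hT => ?_, fun hT p hp => ?_⟩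
  · refine Set.Subset.antisymm (fun p hp => ?_) extremePoints_convexHull_subset
    exact (T.finite_toSet.mem_extremePoints_convexHull_iff hp).2 (hT p hp)
  · exact (T.finite_toSet.mem_extremePoints_convexHull_iff hp).1 (hT ▸ mem_coe.2 hp)

theorem convexPos_vertices (M : Finset (ℝ × ℝ)) : ConvexPos (vertices M) := by
  rw [convexPos_iff_coe_eq_extremePoints, convexHull_vertices, coe_vertices]

theorem ConvexPos.disjoint_interior {T : Finset (ℝ × ℝ)} (hT : ConvexPos T) :
    Disjoint (T : Set (ℝ × ℝ)) (interior (convexHull ℝ (T : Set (ℝ × ℝ)))) := by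
  have := disjoint_interior_extremePoints (convexHull ℝ (T : Set (ℝ × ℝ)))
  rw [← convexPos_iff_coe_eq_extremePoints.1 hT] at this
  exact this.symm

theorem ConvexPos.vertices_eq {T M : Finset (ℝ × ℝ)} (hT : ConvexPos T) (hTM : T ⊆ M)
    (hMT : (M : Set (ℝ × ℝ)) ⊆ convexHull ℝ (T : Set (ℝ × ℝ))) : vertices M = T := by
  have hhull : convexHull ℝ (M : Set (ℝ × ℝ)) = convexHull ℝ (T : Set (ℝ × ℝ)) :=
    (convexHull_min hMT (convex_convexHull ℝ _)).antisymm (convexHull_mono hTM)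
  rw [← coe_inj, coe_vertices, hhull, ← convexPos_iff_coe_eq_extremePoints.1 hT]

theorem Collinear.convexHull {𝕜 E : Type*} [Field 𝕜] [LinearOrder 𝕜] [IsStrictOrderedRing 𝕜]
    [AddCommGroup E] [Module 𝕜 E] {s : Set E} (h : Collinear 𝕜 s) :
    Collinear 𝕜 (convexHull 𝕜 s) := by
  rwa [Collinear, ← direction_affineSpan, affineSpan_convexHull, direction_affineSpan]

theorem collinear_of_ncard_le_two {k E : Type*} [DivisionRing k] [AddCommGroup E] [Module k E]
    {s : Set E} (hs : s.Finite) (h : s.ncard ≤ 2) : Collinear k s := by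
  interval_cases hn : s.ncard
  · simp [(Set.ncard_eq_zero hs).1 hn, collinear_empty]
  · obtain ⟨a, rfl⟩ := Set.ncard_eq_one.1 hn
    exact collinear_singleton k a
  · obtain ⟨a, b, -, rfl⟩ := Set.ncard_eq_two.1 hn
    exact collinear_pair k a b

namespace GenPos

variable {S : Finset (ℝ × ℝ)}

theorem ncard_le_two_of_collinear (hS : GenPos S) {U : Set (ℝ × ℝ)} (hU : U ⊆ S)
    (hc : Collinear ℝ U) : U.ncard ≤ 2 := by
  by_contra! h
  have hfin : U.Finite := S.finite_toSet.subset hU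
  obtain ⟨T, hTU, hT⟩ := exists_subset_card_eq (s := hfin.toFinset) (n := 3)
    (by rw [← Set.ncard_eq_toFinset_card U hfin]; omega)
  have hTU' : (T : Set (ℝ × ℝ)) ⊆ U := fun x hx => hfin.mem_toFinset.1 (hTU hx)
  exact hS T (coe_subset.1 (hTU'.trans hU)) hT (hc.subset hTU')

theorem three_le_card_vertices (hS : GenPos S) {M : Finset (ℝ × ℝ)} (hMS : M ⊆ S)
    (hM : 3 ≤ M.card) : 3 ≤ (vertices M).card := by
  by_contra! h
  have hcol : Collinear ℝ (vertices M : Set (ℝ × ℝ)) :=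
    collinear_of_ncard_le_two (vertices M).finite_toSet (by rw [Set.ncard_coe_finset]; omega)
  have hMcol : Collinear ℝ (M : Set (ℝ × ℝ)) :=
    hcol.convexHull.subset ((convexHull_vertices M).symm ▸ subset_convexHull ℝ _)
  have := hS.ncard_le_two_of_collinear (coe_subset.2 hMS) hMcol
  rw [Set.ncard_coe_finset] at this
  omega

theorem mem_interior_convexHull (hS : GenPos S) {T : Finset (ℝ × ℝ)} (hTS : T ⊆ S) {x : ℝ × ℝ}
    (hxS : x ∈ S) (hxT : x ∉ T) (hx : x ∈ convexHull ℝ (T : Set (ℝ × ℝ))) :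
    x ∈ interior (convexHull ℝ (T : Set (ℝ × ℝ))) := by
  -- Carathéodory: `x` is a positive combination of affinely independent points `z i` of `T`.
  -- Three of them span a triangle with `x` in its interior; with at most two, `x` would be
  -- collinear with them, which general position allows only if `x` is one of them.
  obtain ⟨ι, _, z, w, hzT, hz, hw0, hw1, rfl⟩ := eq_pos_convex_span_of_mem_convexHull hx
  have hcard : Fintype.card ι ≤ 3 := by
    have := hz.card_le_finrank_succ.trans
      (Nat.succ_le_succ (Submodule.finrank_le (vectorSpan ℝ (Set.range z))))
    simpa [Module.finrank_prod] using this
  have hxz : ∑ i, w i • z i ∈ convexHull ℝ (Set.range z) :=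
    (convex_convexHull ℝ _).sum_mem (fun i _ => (hw0 i).le) hw1
      (fun i _ => subset_convexHull ℝ _ (Set.mem_range_self i))
  rcases hcard.lt_or_eq with hlt | h3
  · exfalso
    have hrange : (Set.range z).ncard = Fintype.card ι := by
      rw [Set.ncard_range_of_injective hz.injective, Nat.card_eq_fintype_card]
    have hxnot : ∑ i, w i • z i ∉ Set.range z := fun h => hxT (hzT h)
    have hcol : Collinear ℝ (insert (∑ i, w i • z i) (Set.range z)) :=
      (collinear_insert_iff_of_mem_affineSpan (convexHull_subset_affineSpan _ hxz)).2
        (collinear_of_ncard_le_two (Set.finite_range z) (by omega))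
    have := hS.ncard_le_two_of_collinear
      (Set.insert_subset hxS (hzT.trans (coe_subset.2 hTS))) hcol
    rw [Set.ncard_insert_of_notMem hxnot, hrange] at this
    have : Subsingleton ι := Fintype.card_le_one_iff_subsingleton.1 (by omega)
    exact hxnot (((Set.subsingleton_range z).convex (𝕜 := ℝ)).convexHull_eq ▸ hxz)
  · let b : AffineBasis ι ℝ (ℝ × ℝ) :=
      ⟨z, hz, hz.affineSpan_eq_top_iff_card_eq_finrank_add_one.2
        (by simp [h3, Module.finrank_prod])⟩
    have hb : ∑ i, w i • z i ∈ interior (convexHull ℝ (Set.range b)) := by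
      rw [b.interior_convexHull]
      intro i
      have := b.coord_apply_combination_of_mem (mem_univ i) hw1
      rw [univ.affineCombination_eq_linear_combination _ _ hw1] at this
      exact this ▸ hw0 i
    exact interior_mono (convexHull_mono hzT) hb

end GenPos

namespace Finset

variable {α : Type*}

theorem card_filter_superset_powersetCard [DecidableEq α] {A B : Finset α} (hAB : Disjoint A B)
    {m : ℕ} (hm : A.card ≤ m) :
    ((powersetCard m (A ∪ B)).filter (A ⊆ ·)).card = B.card.choose (m - A.card) := by
  rw [← card_powersetCard]
  refine card_nbij' (· \ A) (A ∪ ·) (fun M hM => ?_) (fun N hN => ?_) (fun M hM => ?_)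
    (fun N hN => ?_) <;> simp only [mem_coe, mem_filter, mem_powersetCard] at *
  · obtain ⟨⟨hMAB, hMm⟩, hAM⟩ := hM
    refine ⟨fun x hx => ?_, by rw [card_sdiff_of_subset hAM, hMm]⟩
    obtain ⟨hxM, hxA⟩ := mem_sdiff.1 hx
    exact (mem_union.1 (hMAB hxM)).resolve_left hxA
  · refine ⟨⟨union_subset_union_right hN.1, ?_⟩, subset_union_left⟩
    rw [card_union_of_disjoint (hAB.mono_right hN.1), hN.2]
    omega
  · exact union_sdiff_of_subset hM.2
  · exact union_sdiff_cancel_left (hAB.mono_right hN.1)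

theorem sum_sum_powersetCard_filter {β : Type*} [AddCommMonoid β] (S : Finset α) (K : Finset ℕ)
    (P : Finset α → Prop) [DecidablePred P] (f : Finset α → β) :
    ∑ k ∈ K, ∑ T ∈ (powersetCard k S).filter P, f T =
      ∑ T ∈ S.powerset.filter (fun T => P T ∧ T.card ∈ K), f T := by
  rw [← sum_fiberwise_of_maps_to (g := card) (t := K) (fun T hT => (mem_filter.1 hT).2.2)]
  refine sum_congr rfl fun k hk => ?_
  congr 1
  ext T
  simp only [mem_filter, mem_powersetCard, mem_powerset]
  grind

end Finset

noncomputable def interiorPoints (S T : Finset (ℝ × ℝ)) : Finset (ℝ × ℝ) :=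
  S.filter (fun p => p ∈ interior (convexHull ℝ (T : Set (ℝ × ℝ))))

section InteriorPoints

variable {S T : Finset (ℝ × ℝ)}

theorem ConvexPos.disjoint_interiorPoints (hT : ConvexPos T) : Disjoint T (interiorPoints S T) :=
  disjoint_left.2 fun _ hpT hpI =>
    Set.disjoint_left.1 hT.disjoint_interior hpT (mem_filter.1 hpI).2

theorem ConvexPos.card_interiorPoints_le (hT : ConvexPos T) (hTS : T ⊆ S) :
    (interiorPoints S T).card ≤ S.card - T.card := by
  rw [← card_sdiff_of_subset hTS]
  exact card_le_card fun p hp =>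
    mem_sdiff.2 ⟨(mem_filter.1 hp).1, disjoint_right.1 hT.disjoint_interiorPoints hp⟩

theorem GenPos.vertices_eq_iff (hS : GenPos S) (hT : ConvexPos T) {M : Finset (ℝ × ℝ)}
    (hMS : M ⊆ S) : vertices M = T ↔ T ⊆ M ∧ M ⊆ T ∪ interiorPoints S T := by
  constructor
  · rintro rfl
    refine ⟨vertices_subset M, fun p hp => ?_⟩
    by_cases hpT : p ∈ vertices M
    · exact mem_union_left _ hpT
    · refine mem_union_right _ (mem_filter.2 ⟨hMS hp, ?_⟩)
      refine hS.mem_interior_convexHull ((vertices_subset M).trans hMS) (hMS hp) hpT ?_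
      rw [convexHull_vertices]
      exact subset_convexHull ℝ _ hp
  · rintro ⟨hTM, hMI⟩
    refine hT.vertices_eq hTM fun p hp => ?_
    rcases mem_union.1 (hMI hp) with hpT | hpI
    · exact subset_convexHull ℝ _ hpT
    · exact interior_subset (mem_filter.1 hpI).2

theorem GenPos.card_filter_vertices_eq (hS : GenPos S) (hT : ConvexPos T) (hTS : T ⊆ S)
    {m : ℕ} (hTm : T.card ≤ m) :
    ((powersetCard m S).filter (vertices · = T)).card =
      (interiorPoints S T).card.choose (m - T.card) := by
  rw [← card_filter_superset_powersetCard hT.disjoint_interiorPoints hTm]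
  congr 1
  ext M
  have hTIS : T ∪ interiorPoints S T ⊆ S := union_subset hTS (filter_subset _ _)
  simp only [mem_filter, mem_powersetCard]
  constructor
  · rintro ⟨⟨hMS, hMm⟩, hMT⟩
    obtain ⟨hTM, hMI⟩ := (hS.vertices_eq_iff hT hMS).1 hMT
    exact ⟨⟨hMI, hMm⟩, hTM⟩
  · rintro ⟨⟨hMI, hMm⟩, hTM⟩
    exact ⟨⟨hMI.trans hTIS, hMm⟩, (hS.vertices_eq_iff hT (hMI.trans hTIS)).2 ⟨hTM, hMI⟩⟩

end InteriorPoints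

theorem sum_choose_mul_X (S : Finset (ℝ × ℝ)) (k m : ℕ) :
    ∑ l ∈ Icc (m - k) (S.card - k), l.choose (m - k) * X S k l =
      ∑ T ∈ (powersetCard k S).filter ConvexPos,
        (interiorPoints S T).card.choose (m - T.card) := by
  set 𝒞 := (powersetCard k S).filter ConvexPos
  have hX : ∀ l, X S k l = (𝒞.filter (fun T => (interiorPoints S T).card = l)).card := by
    intro l
    rw [X, filter_filter]
    rfl
  have hmaps : ∀ T ∈ 𝒞, (interiorPoints S T).card ∈ Iic (S.card - k) := by
    intro T hT
    obtain ⟨hTk, hTC⟩ := mem_filter.1 hT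
    obtain ⟨hTS, rfl⟩ := mem_powersetCard.1 hTk
    exact mem_Iic.2 (hTC.card_interiorPoints_le hTS)
  calc ∑ l ∈ Icc (m - k) (S.card - k), l.choose (m - k) * X S k l
      = ∑ l ∈ Iic (S.card - k), l.choose (m - k) * X S k l := by
        refine sum_subset (fun l hl => mem_Iic.2 (mem_Icc.1 hl).2)
          fun l hl hl' => ?_
        have hlt : l < m - k := by
          simp only [mem_Icc, mem_Iic] at hl hl'
          omega
        rw [Nat.choose_eq_zero_of_lt hlt, zero_mul]
    _ = ∑ l ∈ Iic (S.card - k),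
          ∑ _T ∈ 𝒞.filter (fun T => (interiorPoints S T).card = l), l.choose (m - k) := by
        simp only [hX, sum_const, smul_eq_mul, mul_comm]
    _ = ∑ T ∈ 𝒞, (interiorPoints S T).card.choose (m - k) :=
        sum_fiberwise_of_maps_to' hmaps _
    _ = _ := sum_congr rfl fun T hT =>
        by rw [(mem_powersetCard.1 (mem_filter.1 hT).1).2]

theorem stmt7_general (S : Finset (ℝ × ℝ)) (hgp : GenPos S) (m : ℕ)
    (hm : 3 ≤ m) :
    ∑ k ∈ Finset.Icc 3 m, ∑ l ∈ Finset.Icc (m - k) (S.card - k),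
      l.choose (m - k) * X S k l = S.card.choose m := by
  set 𝒯 := S.powerset.filter (fun T => ConvexPos T ∧ T.card ∈ Icc 3 m)
  have hmaps : ∀ M ∈ powersetCard m S, vertices M ∈ 𝒯 := by
    intro M hM
    obtain ⟨hMS, rfl⟩ := mem_powersetCard.1 hM
    exact mem_filter.2 ⟨mem_powerset.2 ((vertices_subset M).trans hMS),
      convexPos_vertices M, mem_Icc.2 ⟨hgp.three_le_card_vertices hMS hm,
        card_le_card (vertices_subset M)⟩⟩
  calc _ = ∑ T ∈ 𝒯, (interiorPoints S T).card.choose (m - T.card) := by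
        rw [← sum_sum_powersetCard_filter]
        exact sum_congr rfl fun k _ => sum_choose_mul_X S k m
    _ = ∑ T ∈ 𝒯, ((powersetCard m S).filter (vertices · = T)).card := by
        refine sum_congr rfl fun T hT => ?_
        obtain ⟨hTS, hT, hTm⟩ := mem_filter.1 hT
        exact (hgp.card_filter_vertices_eq hT (mem_powerset.1 hTS)
          (mem_Icc.1 hTm).2).symm
    _ = (powersetCard m S).card := (card_eq_sum_card_fiberwise hmaps).symm
    _ = S.card.choose m := card_powersetCard m S

theorem stmt7 (S : Finset (ℝ × ℝ)) (hgp : GenPos S) (m : ℕ)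
    (hm : 3 ≤ m) (hmn : m ≤ S.card) :
    ∑ k ∈ Finset.Icc 3 m, ∑ l ∈ Finset.Icc (m - k) (S.card - k),
      l.choose (m - k) * X S k l = S.card.choose m :=
  stmt7_general S hgp m hm
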